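/- Let E be a real inner product space, θ ∈ [0, π/2), γ₁, γ₂ ∈ E unit vectors with ⟨γ₂, γ₁⟩² < 1, and set N = (cos θ · γ₁, sin θ), N' = (−sin θ · γ₁, cos θ), and n = (γ₂, 0) − cos θ · ⟨γ₂, γ₁⟩ · N in E × ℝ. Then the constant C := 1 − ⟨n/‖n‖, N'⟩² satisfies C = (1 − ⟨γ₂, γ₁⟩²) / (1 − cos²θ · ⟨γ₂, γ₁⟩²). -/

import Mathlib

/-!
`N` is a unit vector orthogonal to `N'`, and `n` is the component of `(γ₂, 0)` orthogonal to `N`.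
Hence `‖n‖² = 1 - cos²θ ⟨γ₂, γ₁⟩²` and `⟨n, N'⟩ = ⟨(γ₂, 0), N'⟩ = -sin θ ⟨γ₂, γ₁⟩`, and the
claim follows from `sin²θ = 1 - cos²θ`.
-/

open scoped RealInnerProductSpace

/-- The vector `N = (cos θ · γ₁, sin θ) ∈ E × ℝ`. -/
noncomputable def Nvec {E : Type*} [NormedAddCommGroup E] [InnerProductSpace ℝ E]
    (θ : ℝ) (γ₁ : E) : WithLp 2 (E × ℝ) :=
  (WithLp.equiv 2 (E × ℝ)).symm (Real.cos θ • γ₁, Real.sin θ)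

/-- The vector `N' = (−sin θ · γ₁, cos θ) ∈ E × ℝ`. -/
noncomputable def Nvec' {E : Type*} [NormedAddCommGroup E] [InnerProductSpace ℝ E]
    (θ : ℝ) (γ₁ : E) : WithLp 2 (E × ℝ) :=
  (WithLp.equiv 2 (E × ℝ)).symm (-(Real.sin θ) • γ₁, Real.cos θ)

/-- The vector `n = (γ₂, 0) − cos θ · ⟨γ₂, γ₁⟩ · N`. -/
noncomputable def nvec {E : Type*} [NormedAddCommGroup E] [InnerProductSpace ℝ E]
    (θ : ℝ) (γ₁ γ₂ : E) : WithLp 2 (E × ℝ) :=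
  (WithLp.equiv 2 (E × ℝ)).symm (γ₂, 0) - (Real.cos θ * ⟪γ₂, γ₁⟫) • Nvec θ γ₁

section General

variable {F : Type*} [NormedAddCommGroup F] [InnerProductSpace ℝ F]

theorem norm_sub_inner_smul_sq_of_norm_eq_one {u : F} (hu : ‖u‖ = 1) (v : F) :
    ‖v - ⟪v, u⟫ • u‖ ^ 2 = ‖v‖ ^ 2 - ⟪v, u⟫ ^ 2 := by
  rw [norm_sub_sq_real, real_inner_smul_right, norm_smul, Real.norm_eq_abs, hu]
  rw [mul_one, sq_abs]
  ring

theorem real_inner_inv_norm_smul_left_sq (x y : F) :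
    ⟪‖x‖⁻¹ • x, y⟫ ^ 2 = ⟪x, y⟫ ^ 2 / ‖x‖ ^ 2 := by
  rw [real_inner_smul_left, mul_pow, inv_pow, inv_mul_eq_div]

end General

section Frame

variable {E : Type*} [NormedAddCommGroup E] [InnerProductSpace ℝ E]

theorem WithLp.inner_toLp_prod (x y : E) (a b : ℝ) :
    ⟪(WithLp.equiv 2 (E × ℝ)).symm (x, a), (WithLp.equiv 2 (E × ℝ)).symm (y, b)⟫ =
      ⟪x, y⟫ + a * b := by
  simp only [WithLp.prod_inner_apply, WithLp.equiv_symm_apply,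
    RCLike.inner_apply, conj_trivial]
  ring

theorem norm_Nvec {γ₁ : E} (hγ₁ : ‖γ₁‖ = 1) (θ : ℝ) : ‖Nvec θ γ₁‖ = 1 := by
  have h : ⟪Nvec θ γ₁, Nvec θ γ₁⟫ = 1 := by
    rw [Nvec, WithLp.inner_toLp_prod, real_inner_smul_left, real_inner_smul_right,
      real_inner_self_eq_norm_sq, hγ₁]
    linear_combination Real.sin_sq_add_cos_sq θ
  rwa [real_inner_self_eq_norm_sq, pow_eq_one_iff_of_nonneg (norm_nonneg _) two_ne_zero] at h

theorem inner_Nvec_Nvec' {γ₁ : E} (hγ₁ : ‖γ₁‖ = 1) (θ : ℝ) : ⟪Nvec θ γ₁, Nvec' θ γ₁⟫ = 0 := by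
  rw [Nvec, Nvec', WithLp.inner_toLp_prod, real_inner_smul_left, real_inner_smul_right,
    real_inner_self_eq_norm_sq, hγ₁]
  ring

theorem inner_toLp_Nvec (θ : ℝ) (γ₁ γ₂ : E) :
    ⟪(WithLp.equiv 2 (E × ℝ)).symm (γ₂, 0), Nvec θ γ₁⟫ = Real.cos θ * ⟪γ₂, γ₁⟫ := by
  rw [Nvec, WithLp.inner_toLp_prod, real_inner_smul_right]
  ring

theorem inner_toLp_Nvec' (θ : ℝ) (γ₁ γ₂ : E) :
    ⟪(WithLp.equiv 2 (E × ℝ)).symm (γ₂, 0), Nvec' θ γ₁⟫ = -Real.sin θ * ⟪γ₂, γ₁⟫ := by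
  rw [Nvec', WithLp.inner_toLp_prod, real_inner_smul_right]
  ring

theorem nvec_eq_sub_inner_smul (θ : ℝ) (γ₁ γ₂ : E) :
    nvec θ γ₁ γ₂ = (WithLp.equiv 2 (E × ℝ)).symm (γ₂, 0) -
      ⟪(WithLp.equiv 2 (E × ℝ)).symm (γ₂, 0), Nvec θ γ₁⟫ • Nvec θ γ₁ := by
  rw [inner_toLp_Nvec, nvec]

theorem norm_nvec_sq {γ₁ γ₂ : E} (hγ₁ : ‖γ₁‖ = 1) (hγ₂ : ‖γ₂‖ = 1) (θ : ℝ) :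
    ‖nvec θ γ₁ γ₂‖ ^ 2 = 1 - Real.cos θ ^ 2 * ⟪γ₂, γ₁⟫ ^ 2 := by
  have h : ‖(WithLp.equiv 2 (E × ℝ)).symm (γ₂, 0)‖ ^ 2 = 1 := by
    rw [← real_inner_self_eq_norm_sq, WithLp.inner_toLp_prod, real_inner_self_eq_norm_sq, hγ₂]
    ring
  rw [nvec_eq_sub_inner_smul, norm_sub_inner_smul_sq_of_norm_eq_one (norm_Nvec hγ₁ θ), h,
    inner_toLp_Nvec]
  ring

theorem inner_nvec_Nvec' {γ₁ : E} (hγ₁ : ‖γ₁‖ = 1) (θ : ℝ) (γ₂ : E) :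
    ⟪nvec θ γ₁ γ₂, Nvec' θ γ₁⟫ = -Real.sin θ * ⟪γ₂, γ₁⟫ := by
  rw [nvec, inner_sub_left, real_inner_smul_left, inner_Nvec_Nvec' hγ₁, inner_toLp_Nvec',
    mul_zero, sub_zero]

end Frame

theorem stmt8_general {E : Type*} [NormedAddCommGroup E] [InnerProductSpace ℝ E]
    (θ : ℝ) (γ₁ γ₂ : E)
    (hγ₁ : ‖γ₁‖ = 1) (hγ₂ : ‖γ₂‖ = 1) (htrans : ⟪γ₂, γ₁⟫ ^ 2 < 1) :
    1 - ⟪‖nvec θ γ₁ γ₂‖⁻¹ • nvec θ γ₁ γ₂, Nvec' θ γ₁⟫ ^ 2 =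
      (1 - ⟪γ₂, γ₁⟫ ^ 2) / (1 - (Real.cos θ) ^ 2 * ⟪γ₂, γ₁⟫ ^ 2) := by
  have hpos : 0 < 1 - Real.cos θ ^ 2 * ⟪γ₂, γ₁⟫ ^ 2 := by
    nlinarith [Real.cos_sq_le_one θ, sq_nonneg ⟪γ₂, γ₁⟫]
  rw [real_inner_inv_norm_smul_left_sq, inner_nvec_Nvec' hγ₁, norm_nvec_sq hγ₁ hγ₂,
    eq_div_iff hpos.ne', sub_mul, div_mul_cancel₀ _ hpos.ne']
  linear_combination -⟪γ₂, γ₁⟫ ^ 2 * Real.sin_sq_add_cos_sq θ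

/-- `C := 1 − ⟨n/‖n‖, N'⟩²` equals
`(1 − ⟨γ₂, γ₁⟩²) / (1 − cos²θ · ⟨γ₂, γ₁⟩²)`. -/
theorem stmt8 {E : Type*} [NormedAddCommGroup E] [InnerProductSpace ℝ E]
    (θ : ℝ) (hθ : θ ∈ Set.Ico 0 (Real.pi / 2)) (γ₁ γ₂ : E)
    (hγ₁ : ‖γ₁‖ = 1) (hγ₂ : ‖γ₂‖ = 1) (htrans : ⟪γ₂, γ₁⟫ ^ 2 < 1) :
    1 - ⟪‖nvec θ γ₁ γ₂‖⁻¹ • nvec θ γ₁ γ₂, Nvec' θ γ₁⟫ ^ 2 =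
      (1 - ⟪γ₂, γ₁⟫ ^ 2) / (1 - (Real.cos θ) ^ 2 * ⟪γ₂, γ₁⟫ ^ 2) :=
  stmt8_general θ γ₁ γ₂ hγ₁ hγ₂ htrans
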